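/- arXiv:1607.06138 — 4 statements merged into one kernel-verified Lean document; each statement's English description precedes it below -/
import Mathlib

section
/- For any natural numbers m, n ≥ 1 and any finite tile set T with |T| ≥ 2, and any set of conditions L = {H^{p(t)}_t, V^{q(t)}_t : t ∈ T} with p(t), q(t) ≥ 2, there exist at least |T|^N tilings f : G_{m,n} → T that are L-dappled, where N = ⌈m/2⌉·⌈n/2⌉. -/
/-!
Fix a fixed-point-free map `τ : T → T` (it exists as `|T| ≥ 2`) and blow every cell of an arbitrary
`⌈m/2⌉ × ⌈n/2⌉` tiling `c` up to the `2 × 2` block `[x, τ x; τ x, τ (τ x)]`, where `x` is the tile of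
that cell. In the resulting tiling the two cells of every horizontal or vertical pair
`(2a, 2a + 1)` differ, and since `p, q ≥ 2` every run of `p + 1` resp. `q + 1` consecutive cells
contains such a pair, so the tiling is dappled. The tiling `c` is read off at the cells with both
coordinates even, so distinct `c` give distinct tilings.
-/

/-- `f` violates the horizontal condition `H^p_t` at cell `(i,j)`:
`f (i,j) = f (i-1,j) = ⋯ = f (i-p,j) = t`. -/
def vioH {T : Type*} (f : ℕ → ℕ → T) (p : ℕ) (t : T) (i j : ℕ) : Prop :=
  p ≤ i ∧ ∀ s ≤ p, f (i - s) j = t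

/-- `f` violates the vertical condition `V^q_t` at cell `(i,j)`. -/
def vioV {T : Type*} (f : ℕ → ℕ → T) (q : ℕ) (t : T) (i j : ℕ) : Prop :=
  q ≤ j ∧ ∀ s ≤ q, f i (j - s) = t

/-- `f` is `L`-dappled on the grid `G_{m,n}` for
`L = {H^{p(t)}_t, V^{q(t)}_t : t ∈ T}`. -/
def Dappled {T : Type*} (m n : ℕ) (p q : T → ℕ) (f : ℕ → ℕ → T) : Prop :=
  ∀ t : T, ∀ i < m, ∀ j < n, ¬ vioH f (p t) t i j ∧ ¬ vioV f (q t) t i j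

section

variable {T : Type*}

theorem not_forall_run_of_ne_odd {g : ℕ → T} {k p : ℕ}
    (hg : ∀ i ≤ k, i % 2 = 1 → g i ≠ g (i - 1)) (hp : 2 ≤ p) (hpk : p ≤ k) (t : T) :
    ¬ ∀ s ≤ p, g (k - s) = t := by
  intro hrun
  obtain ⟨s, hs, hodd⟩ : ∃ s ≤ 1, (k - s) % 2 = 1 := ⟨1 - k % 2, by omega, by omega⟩
  refine hg (k - s) (by omega) hodd ?_
  rw [hrun s (by omega), show k - s - 1 = k - (s + 1) by omega, hrun (s + 1) (by omega)]

theorem dappled_of_ne_odd {m n : ℕ} {p q : T → ℕ} {F : ℕ → ℕ → T}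
    (hp : ∀ t, 2 ≤ p t) (hq : ∀ t, 2 ≤ q t)
    (hH : ∀ i < m, ∀ j < n, i % 2 = 1 → F i j ≠ F (i - 1) j)
    (hV : ∀ i < m, ∀ j < n, j % 2 = 1 → F i j ≠ F i (j - 1)) :
    Dappled m n p q F := fun t i hi j hj =>
  ⟨fun ⟨hpi, hrun⟩ => not_forall_run_of_ne_odd (g := fun i => F i j)
      (fun _ hi' => hH _ (by omega) j hj) (hp t) hpi t hrun,
    fun ⟨hqj, hrun⟩ => not_forall_run_of_ne_odd (g := F i)
      (fun _ hj' => hV i hi _ (by omega)) (hq t) hqj t hrun⟩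

def blockTiling (τ : T → T) (c : ℕ → ℕ → T) (i j : ℕ) : T :=
  τ^[i % 2 + j % 2] (c (i / 2) (j / 2))

theorem blockTiling_two_mul (τ : T → T) (c : ℕ → ℕ → T) (a b : ℕ) :
    blockTiling τ c (2 * a) (2 * b) = c a b := by
  simp [blockTiling]

variable {τ : T → T}

theorem blockTiling_ne_sub_one_left (hτ : ∀ x, τ x ≠ x) (c : ℕ → ℕ → T) {i : ℕ}
    (hi : i % 2 = 1) (j : ℕ) : blockTiling τ c i j ≠ blockTiling τ c (i - 1) j := by
  obtain ⟨h0, hdiv⟩ : (i - 1) % 2 = 0 ∧ (i - 1) / 2 = i / 2 := by omega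
  rw [blockTiling, blockTiling, hi, h0, hdiv, add_comm 1, zero_add,
    Function.iterate_succ_apply']
  exact hτ _

theorem blockTiling_ne_sub_one_right (hτ : ∀ x, τ x ≠ x) (c : ℕ → ℕ → T) (i : ℕ) {j : ℕ}
    (hj : j % 2 = 1) : blockTiling τ c i j ≠ blockTiling τ c i (j - 1) := by
  obtain ⟨h0, hdiv⟩ : (j - 1) % 2 = 0 ∧ (j - 1) / 2 = j / 2 := by omega
  rw [blockTiling, blockTiling, hj, h0, hdiv, add_zero, Function.iterate_succ_apply']
  exact hτ _

theorem dappled_blockTiling_mod (hτ : ∀ x, τ x ≠ x) {p q : T → ℕ}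
    (hp : ∀ t, 2 ≤ p t) (hq : ∀ t, 2 ≤ q t) (c : ℕ → ℕ → T) (m n : ℕ) :
    Dappled m n p q (fun i j => blockTiling τ c (i % m) (j % n)) := by
  refine dappled_of_ne_odd hp hq (fun i hi j hj hodd => ?_) (fun i hi j hj hodd => ?_)
  · simp only [Nat.mod_eq_of_lt hi, Nat.mod_eq_of_lt hj, Nat.mod_eq_of_lt (by omega : i - 1 < m)]
    exact blockTiling_ne_sub_one_left hτ c hodd j
  · simp only [Nat.mod_eq_of_lt hi, Nat.mod_eq_of_lt hj, Nat.mod_eq_of_lt (by omega : j - 1 < n)]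
    exact blockTiling_ne_sub_one_right hτ c i hodd

end

theorem stmt0 {T : Type*} [Fintype T] (m n : ℕ) (hm : 1 ≤ m) (hn : 1 ≤ n)
    (hT : 2 ≤ Fintype.card T) (p q : T → ℕ)
    (hp : ∀ t, 2 ≤ p t) (hq : ∀ t, 2 ≤ q t) :
    Fintype.card T ^ (((m + 1) / 2) * ((n + 1) / 2)) ≤
      Nat.card {f : Fin m → Fin n → T //
        Dappled m n p q
          (fun i j => f ⟨i % m, Nat.mod_lt i hm⟩ ⟨j % n, Nat.mod_lt j hn⟩)} := by
  set M := (m + 1) / 2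
  set N := (n + 1) / 2
  have hM : 0 < M := by omega
  have hN : 0 < N := by omega
  choose τ hτ using fun x : T => Fintype.exists_ne_of_one_lt_card hT x
  let tiling (c : Fin M → Fin N → T) : Fin m → Fin n → T := fun i j =>
    blockTiling τ (fun a b => c ⟨a % M, Nat.mod_lt a hM⟩ ⟨b % N, Nat.mod_lt b hN⟩) i j
  have tiling_injective : Function.Injective tiling := by
    intro c c' h
    funext a b
    have := congrFun₂ h ⟨2 * a, by omega⟩ ⟨2 * b, by omega⟩
    simpa [tiling, blockTiling_two_mul, Nat.mod_eq_of_lt] using this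
  calc Fintype.card T ^ (M * N) = Nat.card (Fin M → Fin N → T) := by
        simp [pow_mul']
    _ ≤ _ := Nat.card_le_card_of_injective
        (fun c => ⟨tiling c, dappled_blockTiling_mod hτ hp hq _ m n⟩)
        fun c c' h => tiling_injective (congrArg Subtype.val h)
end

section
/- There exists a set of conditions including an exponent equal to 1 for which the local-surgery algorithm fails: with T = {0,1} and L = {H^1_0, H^2_1, V^2_1}, the tiling of G_{4,3} given by rows (1,0,1,1), (0,1,0,1), (1,1,0,0) (top to bottom) cannot be rectified by the algorithm; indeed, no L-dappled tiling agrees with this tiling on all cells of weight < some critical weight where the algorithm gets stuck. More concretely: there is no assignment of values at a violating cell and its two surgery neighbors resolving the violation without introducing a violation at a cell of weight ≤ the violating cell's weight. -/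
/-- `L`-dappled for `L = {H^1_0, H^2_1, V^2_1}` on `G_{4,3}`. -/
def Dappled9 (f : ℕ → ℕ → Fin 2) : Prop :=
  ∀ i < 4, ∀ j < 3,
    ¬(1 ≤ i ∧ f i j = 0 ∧ f (i-1) j = 0) ∧
    ¬(2 ≤ i ∧ f i j = 1 ∧ f (i-1) j = 1 ∧ f (i-2) j = 1) ∧
    ¬(2 ≤ j ∧ f i j = 1 ∧ f i (j-1) = 1 ∧ f i (j-2) = 1)

/-- The tiling of `G_{4,3}` with rows `(1,0,1,1)`, `(0,1,0,1)`, `(1,1,0,0)`. -/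
def f9 : ℕ → ℕ → Fin 2 := fun i j =>
  if j = 0 then (if i = 1 then 0 else 1)
  else if j = 1 then (if i = 0 ∨ i = 2 then 0 else 1)
  else (if i ≤ 1 then 1 else 0)

/-!
The tile at the violating cell `(3, 2)` is squeezed: the `0` at `(2, 2)` forces a `1` there by
`H^1_0`, the `1`s at `(3, 1)`, `(3, 0)` force a `0` by `V^2_1`. These three cells have weight
`< 5`, and even when `(2, 2)` and `(3, 1)` may be changed, `H^2_1` (the `1`s at `(0, 2)`, `(1, 2)`)
and `H^1_0` (the `0` at `(2, 1)`) force them back to the same values.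
-/

namespace Dappled9

variable {g : ℕ → ℕ → Fin 2} {i j : ℕ}

theorem eq_one_of_left_eq_zero (hg : Dappled9 g) (hi : i < 4) (hj : j < 3) (hi1 : 1 ≤ i)
    (hleft : g (i - 1) j = 0) : g i j = 1 :=
  Fin.eq_one_of_ne_zero _ fun h => (hg i hi j hj).1 ⟨hi1, h, hleft⟩

theorem eq_zero_of_two_left_eq_one (hg : Dappled9 g) (hi : i < 4) (hj : j < 3) (hi2 : 2 ≤ i)
    (hleft : g (i - 1) j = 1) (hleft₂ : g (i - 2) j = 1) : g i j = 0 := by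
  by_contra h
  exact (hg i hi j hj).2.1 ⟨hi2, Fin.eq_one_of_ne_zero _ h, hleft, hleft₂⟩

theorem eq_zero_of_two_above_eq_one (hg : Dappled9 g) (hi : i < 4) (hj : j < 3) (hj2 : 2 ≤ j)
    (habove : g i (j - 1) = 1) (habove₂ : g i (j - 2) = 1) : g i j = 0 := by
  by_contra h
  exact (hg i hi j hj).2.2 ⟨hj2, Fin.eq_one_of_ne_zero _ h, habove, habove₂⟩

theorem not_left_eq_zero_and_two_above_eq_one (hg : Dappled9 g) (hi : i < 4) (hj : j < 3)
    (hi1 : 1 ≤ i) (hj2 : 2 ≤ j) (hleft : g (i - 1) j = 0) (habove : g i (j - 1) = 1)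
    (habove₂ : g i (j - 2) = 1) : False := by
  have h1 := hg.eq_one_of_left_eq_zero hi hj hi1 hleft
  have h0 := hg.eq_zero_of_two_above_eq_one hi hj hj2 habove habove₂
  exact absurd (h1.symm.trans h0) (by decide)

end Dappled9

/-- The algorithm gets stuck on `f9` for `L = {H^1_0, H^2_1, V^2_1}`: no
`L`-dappled tiling agrees with `f9` on all cells of weight `< 5` (the weight of
the unique violating cell `(3,2)`), and no modification of `f9` at the
violating cell `(3,2)` and its two surgery neighbours `(2,2)`, `(3,1)` yields
an `L`-dappled tiling. -/
theorem stmt9 :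
    (¬ ∃ g : ℕ → ℕ → Fin 2, Dappled9 g ∧
      ∀ i j, i < 4 → j < 3 → i + j < 5 → g i j = f9 i j) ∧
    (¬ ∃ g : ℕ → ℕ → Fin 2, Dappled9 g ∧
      ∀ i j, (i, j) ≠ (3, 2) → (i, j) ≠ (2, 2) → (i, j) ≠ (3, 1) →
        g i j = f9 i j) := by
  constructor
  · rintro ⟨g, hg, hagree⟩
    exact hg.not_left_eq_zero_and_two_above_eq_one (i := 3) (j := 2) (by decide) (by decide)
      (by decide) le_rfl (hagree 2 2 (by decide) (by decide) (by decide))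
      (hagree 3 1 (by decide) (by decide) (by decide))
      (hagree 3 0 (by decide) (by decide) (by decide))
  · rintro ⟨g, hg, hagree⟩
    have h21 : g 2 1 = 0 := hagree 2 1 (by decide) (by decide) (by decide)
    have h30 : g 3 0 = 1 := hagree 3 0 (by decide) (by decide) (by decide)
    have h12 : g 1 2 = 1 := hagree 1 2 (by decide) (by decide) (by decide)
    have h02 : g 0 2 = 1 := hagree 0 2 (by decide) (by decide) (by decide)
    have h31 : g 3 1 = 1 := hg.eq_one_of_left_eq_zero (by decide) (by decide) (by decide) h21
    have h22 : g 2 2 = 0 :=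
      hg.eq_zero_of_two_left_eq_one (by decide) (by decide) le_rfl h12 h02
    exact hg.not_left_eq_zero_and_two_above_eq_one (i := 3) (j := 2) (by decide) (by decide)
      (by decide) le_rfl h22 h31 h30
end

section
/- Every L-dappled tiling of G_{m,n} with T = {0,1} and L = {H^p_0, V^q_1} (p, q ≥ 2) gives rise to a valid brick Wang tiling: given an L-dappled f, there exists τ : G_{m,n} → W such that τ(i,j)_1 = τ(i-1,j)_3 and τ(i,j)_2 = τ(i,j-1)_4 for all interior adjacencies, and τ(i,j) ∈ W_0 (i.e., c_1 = c_3) iff f(i,j) = 0; consequently τ has no horizontal run of more than p tiles from W_0 and no vertical run of more than q tiles from W_1. -/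
/-!
Colour the edge between tiles `(i-1,j)` and `(i,j)` by the parity of the number of `1`'s of `f`
among `(0,j), …, (i-1,j)`, and the edge between `(i,j-1)` and `(i,j)` by the parity of the number
of `0`'s among `(i,0), …, (i,j-1)`. Then a tile's two horizontal colours agree exactly when
`f(i,j) = 0`, and its two vertical colours agree exactly when `f(i,j) = 1`, so every tile is a
brick tile of the type prescribed by `f`, adjacent tiles match by construction, and the forbidden
runs of `f` become the forbidden runs of tiles.
-/

/-- `w = (c₁,c₂,c₃,c₄)` is a brick Wang tile:
`(c₁ = c₃ ∧ c₂ ≠ c₄) ∨ (c₁ ≠ c₃ ∧ c₂ = c₄)`. -/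
def isW {C : Type*} (w : C × C × C × C) : Prop :=
  (w.1 = w.2.2.1 ∧ w.2.1 ≠ w.2.2.2) ∨ (w.1 ≠ w.2.2.1 ∧ w.2.1 = w.2.2.2)

open Nat

section BrickTiling

variable {C : Type*} (c0 c1 : C)

def parityColor (k : ℕ) : C := if Even k then c0 else c1

variable {c0 c1}

theorem parityColor_eq_iff (hC : c0 ≠ c1) (a b : ℕ) :
    parityColor c0 c1 a = parityColor c0 c1 b ↔ (Even a ↔ Even b) := by
  unfold parityColor
  by_cases ha : Even a <;> by_cases hb : Even b <;> simp [ha, hb, hC, hC.symm]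

theorem parityColor_count_succ_eq_iff (hC : c0 ≠ c1) (P : ℕ → Prop) [DecidablePred P] (i : ℕ) :
    parityColor c0 c1 (count P (i + 1)) = parityColor c0 c1 (count P i) ↔ ¬P i := by
  rw [parityColor_eq_iff hC, count_succ]
  by_cases h : P i <;> simp [h, Nat.even_add_one, -Nat.not_even_iff_odd]

variable (c0 c1)

def brickTiling (f : ℕ → ℕ → Fin 2) (i j : ℕ) : C × C × C × C :=
  let horizontal i j := parityColor c0 c1 (count (fun k => f k j = 1) i)
  let vertical i j := parityColor c0 c1 (count (fun k => f i k = 0) j)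
  (horizontal i j, vertical i j, horizontal (i + 1) j, vertical i (j + 1))

variable {c0 c1}

theorem brickTiling_fst_eq_iff (hC : c0 ≠ c1) (f : ℕ → ℕ → Fin 2) (i j : ℕ) :
    (brickTiling c0 c1 f i j).1 = (brickTiling c0 c1 f i j).2.2.1 ↔ f i j = 0 := by
  rw [brickTiling, eq_comm, parityColor_count_succ_eq_iff hC]
  omega

theorem brickTiling_snd_eq_iff (hC : c0 ≠ c1) (f : ℕ → ℕ → Fin 2) (i j : ℕ) :
    (brickTiling c0 c1 f i j).2.1 = (brickTiling c0 c1 f i j).2.2.2 ↔ f i j = 1 := by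
  rw [brickTiling, eq_comm, parityColor_count_succ_eq_iff hC]
  omega

theorem isW_brickTiling (hC : c0 ≠ c1) (f : ℕ → ℕ → Fin 2) (i j : ℕ) :
    isW (brickTiling c0 c1 f i j) := by
  simp only [isW, ne_eq, brickTiling_fst_eq_iff hC, brickTiling_snd_eq_iff hC]
  omega

theorem brickTiling_fst_eq_prev (f : ℕ → ℕ → Fin 2) {i : ℕ} (hi : 1 ≤ i) (j : ℕ) :
    (brickTiling c0 c1 f i j).1 = (brickTiling c0 c1 f (i - 1) j).2.2.1 := by
  simp only [brickTiling, Nat.sub_add_cancel hi]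

theorem brickTiling_snd_eq_prev (f : ℕ → ℕ → Fin 2) (i : ℕ) {j : ℕ} (hj : 1 ≤ j) :
    (brickTiling c0 c1 f i j).2.1 = (brickTiling c0 c1 f i (j - 1)).2.2.2 := by
  simp only [brickTiling, Nat.sub_add_cancel hj]

end BrickTiling

theorem stmt10_general {C : Type*} (c0 c1 : C) (hC : c0 ≠ c1)
    (m n : ℕ) (p q : ℕ)
    (f : ℕ → ℕ → Fin 2)
    (hH : ∀ i < m, ∀ j < n, ¬(p ≤ i ∧ ∀ s ≤ p, f (i-s) j = 0))
    (hV : ∀ i < m, ∀ j < n, ¬(q ≤ j ∧ ∀ s ≤ q, f i (j-s) = 1)) :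
    ∃ τ : ℕ → ℕ → C × C × C × C,
      (∀ i < m, ∀ j < n, isW (τ i j)) ∧
      (∀ i j, 1 ≤ i → i < m → j < n → (τ i j).1 = (τ (i-1) j).2.2.1) ∧
      (∀ i j, 1 ≤ j → i < m → j < n → (τ i j).2.1 = (τ i (j-1)).2.2.2) ∧
      (∀ i < m, ∀ j < n, ((τ i j).1 = (τ i j).2.2.1 ↔ f i j = 0)) ∧
      (∀ i < m, ∀ j < n, ¬(p ≤ i ∧ ∀ s ≤ p, (τ (i-s) j).1 = (τ (i-s) j).2.2.1)) ∧
      (∀ i < m, ∀ j < n, ¬(q ≤ j ∧ ∀ s ≤ q, (τ i (j-s)).2.1 = (τ i (j-s)).2.2.2)) := by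
  refine ⟨brickTiling c0 c1 f, fun i _ j _ => isW_brickTiling hC f i j,
    fun i j hi _ _ => brickTiling_fst_eq_prev f hi j,
    fun i j hj _ _ => brickTiling_snd_eq_prev f i hj,
    fun i _ j _ => brickTiling_fst_eq_iff hC f i j, ?_, ?_⟩
  · simpa only [brickTiling_fst_eq_iff hC] using hH
  · simpa only [brickTiling_snd_eq_iff hC] using hV

/-- Every `L`-dappled tiling with `L = {H^p_0, V^q_1}` gives rise to a valid
brick Wang tiling `τ` with `τ(i,j) ∈ W₀ ↔ f(i,j) = 0`; consequently `τ` has no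
horizontal run of more than `p` tiles from `W₀` and no vertical run of more
than `q` tiles from `W₁`. -/
theorem stmt10 {C : Type*} (c0 c1 : C) (hC : c0 ≠ c1)
    (m n : ℕ) (p q : ℕ) (hp : 2 ≤ p) (hq : 2 ≤ q)
    (f : ℕ → ℕ → Fin 2)
    (hH : ∀ i < m, ∀ j < n, ¬(p ≤ i ∧ ∀ s ≤ p, f (i-s) j = 0))
    (hV : ∀ i < m, ∀ j < n, ¬(q ≤ j ∧ ∀ s ≤ q, f i (j-s) = 1)) :
    ∃ τ : ℕ → ℕ → C × C × C × C,
      (∀ i < m, ∀ j < n, isW (τ i j)) ∧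
      (∀ i j, 1 ≤ i → i < m → j < n → (τ i j).1 = (τ (i-1) j).2.2.1) ∧
      (∀ i j, 1 ≤ j → i < m → j < n → (τ i j).2.1 = (τ i (j-1)).2.2.2) ∧
      (∀ i < m, ∀ j < n, ((τ i j).1 = (τ i j).2.2.1 ↔ f i j = 0)) ∧
      (∀ i < m, ∀ j < n, ¬(p ≤ i ∧ ∀ s ≤ p, (τ (i-s) j).1 = (τ (i-s) j).2.2.1)) ∧
      (∀ i < m, ∀ j < n, ¬(q ≤ j ∧ ∀ s ≤ q, (τ i (j-s)).2.1 = (τ i (j-s)).2.2.2)) :=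
  stmt10_general c0 c1 hC m n p q f hH hV
end

section
/- If f : G_{m,n} → T is a cyclically L̄-dappled tiling, then its periodic extension to G_{km,ln} (defined by F(i,j) = f(i mod m, j mod n)) is an L-dappled tiling of G_{km,ln} for the corresponding non-cyclic conditions L = {H^{p(t)}_t, V^{q(t)}_t}, for every k, l ≥ 1, provided p(t) < m and q(t) < n for all t. -/
theorem Nat.sub_mod_eq_mod_add_sub_mod {i s m : ℕ} (hsm : s ≤ m) (hsi : s ≤ i) :
    (i - s) % m = (i % m + m - s) % m := by
  rw [show i % m + m - s = i % m + (m - s) by omega, Nat.mod_add_mod,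
    show i + (m - s) = i - s + m by omega, Nat.add_mod_right]

section PeriodicExtension

variable {T : Type*} {m n p : ℕ} {f : ℕ → ℕ → T} {t : T} {i j : ℕ}

theorem forall_cyclic_run_of_vioH (hpm : p < m)
    (h : vioH (fun i j => f (i % m) (j % n)) p t i j) :
    ∀ s ≤ p, f ((i % m + m - s) % m) (j % n) = t := by
  obtain ⟨hpi, hrun⟩ := h
  intro s hs
  rw [← Nat.sub_mod_eq_mod_add_sub_mod (by omega) (by omega)]
  exact hrun s hs

theorem forall_cyclic_run_of_vioV (hpn : p < n)
    (h : vioV (fun i j => f (i % m) (j % n)) p t i j) :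
    ∀ s ≤ p, f (i % m) ((j % n + n - s) % n) = t := by
  obtain ⟨hpj, hrun⟩ := h
  intro s hs
  rw [← Nat.sub_mod_eq_mod_add_sub_mod (by omega) (by omega)]
  exact hrun s hs

end PeriodicExtension

theorem stmt15_general {T : Type*} (m n : ℕ)
    (p q : T → ℕ) (hpm : ∀ t, p t < m) (hqn : ∀ t, q t < n)
    (f : ℕ → ℕ → T)
    (hH : ∀ t : T, ∀ i < m, ∀ j < n, ¬ ∀ s ≤ p t, f ((i + m - s) % m) j = t)
    (hV : ∀ t : T, ∀ i < m, ∀ j < n, ¬ ∀ s ≤ q t, f i ((j + n - s) % n) = t)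
    (k l : ℕ) :
    Dappled (k * m) (l * n) p q (fun i j => f (i % m) (j % n)) := by
  intro t i hi j hj
  have hm : 0 < m := Nat.pos_of_ne_zero fun h => by simp [h] at hi
  have hn : 0 < n := Nat.pos_of_ne_zero fun h => by simp [h] at hj
  exact ⟨fun h => hH t _ (Nat.mod_lt i hm) _ (Nat.mod_lt j hn)
      (forall_cyclic_run_of_vioH (hpm t) h),
    fun h => hV t _ (Nat.mod_lt i hm) _ (Nat.mod_lt j hn)
      (forall_cyclic_run_of_vioV (hqn t) h)⟩

/-- The periodic extension of a cyclically `L̄`-dappled tiling of `G_{m,n}` to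
`G_{km,ln}` is `L`-dappled, provided `p(t) < m` and `q(t) < n` for all `t`. -/
theorem stmt15 {T : Type*} (m n : ℕ) (hm : 0 < m) (hn : 0 < n)
    (p q : T → ℕ) (hpm : ∀ t, p t < m) (hqn : ∀ t, q t < n)
    (f : ℕ → ℕ → T)
    (hH : ∀ t : T, ∀ i < m, ∀ j < n, ¬ ∀ s ≤ p t, f ((i + m - s) % m) j = t)
    (hV : ∀ t : T, ∀ i < m, ∀ j < n, ¬ ∀ s ≤ q t, f i ((j + n - s) % n) = t)
    (k l : ℕ) (hk : 1 ≤ k) (hl : 1 ≤ l) :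
    Dappled (k * m) (l * n) p q (fun i j => f (i % m) (j % n)) :=
  stmt15_general m n p q hpm hqn f hH hV k l
end
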